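/- If I is a hereditary weak P-ideal on ω, then the space ω₁ of countable ordinals with the order topology is in FinBW(I): for every function g : ω → ω₁ there exists A ∉ I such that (g(n))_{n∈A} converges in ω₁. -/

import Mathlib

open Set

/-- The ideal `Fin ⊗ Fin` on `ω²`: sets all but finitely many of whose
vertical sections are finite. -/
def FinFin : Set (Set (ℕ × ℕ)) :=
  {A | {n : ℕ | ¬ ({m : ℕ | (n, m) ∈ A}).Finite}.Finite}

/-- The `i`-th section of a subset of `ω³`. -/
def BIsec (i : ℕ) (A : Set (ℕ × ℕ × ℕ)) : Set (ℕ × ℕ) := {p | (i, p) ∈ A}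

/-- The ideal `BI` on `ω³`. -/
def BI : Set (Set (ℕ × ℕ × ℕ)) :=
  {A | ∃ k : ℕ, (∀ i < k, BIsec i A ∈ FinFin) ∧ ∀ i ≥ k, (BIsec i A).Finite}

/-- `I` is an ideal on `X`: contains all finite sets, closed under subsets and
finite unions, and proper. -/
def IsIdeal {X : Type*} (I : Set (Set X)) : Prop :=
  (∀ A : Set X, A.Finite → A ∈ I) ∧
  (∀ A B : Set X, A ∈ I → B ⊆ A → B ∈ I) ∧
  (∀ A B : Set X, A ∈ I → B ∈ I → A ∪ B ∈ I) ∧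
  (Set.univ : Set X) ∉ I

/-- A Hausdorff space is *boring* if it is sequentially compact and some finite
set receives the limits of all injective convergent sequences. -/
def Boring (X : Type*) [TopologicalSpace X] : Prop :=
  SeqCompactSpace X ∧ ∃ F : Finset X, ∀ (x : ℕ → X) (l : X),
    Function.Injective x → Filter.Tendsto x Filter.atTop (nhds l) → l ∈ F

/-- The sequence `(x n)_{n ∈ A}` converges to `l`. -/
def ConvAlong {X : Type*} [TopologicalSpace X] (A : Set ℕ) (x : ℕ → X) (l : X) : Prop :=
  ∀ U ∈ nhds l, {n ∈ A | x n ∉ U}.Finite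

/-- `X ∈ FinBW(I)`: every sequence converges along some `I`-positive index set. -/
def FinBW (I : Set (Set ℕ)) (X : Type*) [TopologicalSpace X] : Prop :=
  ∀ x : ℕ → X, ∃ A : Set ℕ, A ∉ I ∧ ∃ l : X, ConvAlong A x l

/-- `I|B` contains an isomorphic copy of `Fin ⊗ Fin`. -/
def FinFinCopyOn (I : Set (Set ℕ)) (B : Set ℕ) : Prop :=
  ∃ g : ℕ → ℕ × ℕ, Set.BijOn g B Set.univ ∧ ∀ C ∈ FinFin, B ∩ g ⁻¹' C ∈ I

/-- The space `ω₁` of countable ordinals. -/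
def Omega1 : Type 1 := {o : Ordinal // o < (Cardinal.aleph 1).ord}

noncomputable instance : LinearOrder Omega1 := Subtype.instLinearOrder _

noncomputable instance : TopologicalSpace Omega1 := Preorder.topology Omega1

instance : OrderTopology Omega1 := ⟨rfl⟩

/-! The limit is the least `l` whose initial segment `{n | g n ≤ l}` is `I`-positive. If `l` itself
is attained only on an `I`-small set, then `B = {n | g n < l}` is `I`-positive and is the increasing
union of the `I`-small segments `{n | g n ≤ γ k}`, for a sequence `γ` cofinal in the countable set
`Iio l`. An `I`-positive subset of `B` meeting every segment finitely converges to `l`. If there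
were none, the segments would have to grow by infinite sets along a subsequence, and these
increments, all in `I`, would be the columns of a copy of `Fin ⊗ Fin` in `I|B`. -/

open Function

namespace IsIdeal

variable {X : Type*} {I : Set (Set X)}

theorem mem_of_subset (hI : IsIdeal I) {A B : Set X} (hA : A ∈ I) (hBA : B ⊆ A) : B ∈ I :=
  hI.2.1 A B hA hBA

theorem mem_of_subset_union (hI : IsIdeal I) {A B C : Set X} (hA : A ∈ I) (hB : B ∈ I)
    (hC : C ⊆ A ∪ B) : C ∈ I :=
  hI.mem_of_subset (hI.2.2.1 A B hA hB) hC

theorem biUnion_mem (hI : IsIdeal I) {ι : Type*} (s : Finset ι) {D : ι → Set X}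
    (hD : ∀ i ∈ s, D i ∈ I) : ⋃ i ∈ s, D i ∈ I := by
  classical
  induction s using Finset.induction_on with
  | empty => simpa using hI.1 ∅ finite_empty
  | insert i s _ ih =>
    rw [Finset.set_biUnion_insert]
    exact hI.mem_of_subset_union (hD i (s.mem_insert_self i))
      (ih fun j hj => hD j (Finset.mem_insert_of_mem hj)) subset_rfl

theorem nonempty_of_notMem (hI : IsIdeal I) {A : Set X} (hA : A ∉ I) : A.Nonempty :=
  nonempty_iff_ne_empty.2 fun h => hA (h ▸ hI.1 ∅ finite_empty)

end IsIdeal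

theorem exists_bijOn_prod_of_pairwise_disjoint (D : ℕ → Set ℕ)
    (hdisj : Pairwise (Disjoint on D)) (hinf : ∀ j, (D j).Infinite) :
    ∃ g : ℕ → ℕ × ℕ, BijOn g (⋃ j, D j) univ ∧ ∀ j, ∀ n ∈ D j, (g n).1 = j := by
  classical
  let J : ℕ → ℕ := fun n => Classical.epsilon fun j => n ∈ D j
  have hJ : ∀ {j n}, n ∈ D j → J n = j := fun {j n} hn => by
    by_contra hne
    exact disjoint_left.1 (hdisj hne) (Classical.epsilon_spec (p := fun i => n ∈ D i) ⟨j, hn⟩) hn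
  refine ⟨fun n => (J n, Nat.count (· ∈ D (J n)) n), ⟨mapsTo_univ _ _, ?_, ?_⟩,
    fun j n hn => hJ hn⟩
  · simp only [InjOn, mem_iUnion, Prod.mk.injEq]
    rintro a ⟨i, ha⟩ b ⟨j, hb⟩ ⟨hab, hcount⟩
    rw [hJ ha, hJ hb] at hab hcount
    subst hab
    rw [← Nat.nth_count ha, hcount, Nat.nth_count hb]
  · rintro ⟨j, c⟩ -
    have hmem : Nat.nth (· ∈ D j) c ∈ D j :=
      Nat.nth_mem_of_infinite (p := (· ∈ D j)) (hinf j) c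
    refine ⟨_, mem_iUnion.2 ⟨j, hmem⟩, ?_⟩
    simp only [hJ hmem, Nat.count_nth_of_infinite (p := (· ∈ D j)) (hinf j)]

variable {I : Set (Set ℕ)}

/-- The pieces `D j` become the columns of the copy of `Fin ⊗ Fin`. -/
theorem IsIdeal.finFinCopyOn_iUnion (hI : IsIdeal I) (D : ℕ → Set ℕ)
    (hdisj : Pairwise (Disjoint on D)) (hinf : ∀ j, (D j).Infinite) (hDI : ∀ j, D j ∈ I)
    (hsmall : ∀ A ⊆ ⋃ j, D j, (∀ j, (A ∩ D j).Finite) → A ∈ I) :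
    FinFinCopyOn I (⋃ j, D j) := by
  obtain ⟨g, hbij, hfst⟩ := exists_bijOn_prod_of_pairwise_disjoint D hdisj hinf
  refine ⟨g, hbij, fun C hC => ?_⟩
  obtain ⟨K, hK⟩ := (hC : Set.Finite _).bddAbove
  set P := ⋃ j ∈ Finset.range (K + 1), D j
  have hrest : ((⋃ j, D j) ∩ g ⁻¹' C) \ P ∈ I := by
    refine hsmall _ (sdiff_subset.trans inter_subset_left) fun j => ?_
    rcases le_or_gt j K with hjK | hKj
    · refine finite_empty.subset fun n ⟨hn, hnj⟩ => hn.2 ?_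
      exact mem_biUnion (Finset.mem_range.2 (Nat.lt_succ_of_le hjK)) hnj
    · have hsec : {m | (j, m) ∈ C}.Finite := not_not.1 fun h => hKj.not_ge (hK h)
      refine Finite.of_finite_image ((hsec.image (Prod.mk j)).subset ?_)
        (hbij.injOn.mono fun n hn => hn.1.1.1)
      rintro ⟨i, m⟩ ⟨n, ⟨⟨⟨-, hnC⟩, -⟩, hnj⟩, hgn⟩
      rw [mem_preimage, hgn] at hnC
      obtain rfl : i = j := by rw [← hfst j n hnj, hgn]
      exact ⟨m, hnC, rfl⟩
  exact hI.mem_of_subset_union (hI.biUnion_mem _ fun j _ => hDI j) hrest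
    (sdiff_subset_iff.1 subset_rfl)

theorem IsIdeal.exists_notMem_forall_inter_finite (hI : IsIdeal I) {B : Set ℕ} (hB : B ∉ I)
    (hcopy : ¬ FinFinCopyOn I B) {Bk : ℕ → Set ℕ} (hmono : Monotone Bk) (hBkI : ∀ k, Bk k ∈ I)
    (hcover : ⋃ k, Bk k = B) : ∃ A ⊆ B, A ∉ I ∧ ∀ k, (A ∩ Bk k).Finite := by
  by_contra hcon
  have hsmall : ∀ A ⊆ B, (∀ k, (A ∩ Bk k).Finite) → A ∈ I := fun A hAB hfin =>
    not_not.1 fun hA => hcon ⟨A, hAB, hA, hfin⟩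
  have hgrow : ∀ M, ∃ k, (Bk k \ Bk M).Infinite := by
    intro M
    by_contra! hfin
    refine hB (hI.mem_of_subset_union (hBkI M) (hsmall (B \ Bk M) sdiff_subset fun k => ?_)
      (sdiff_subset_iff.1 subset_rfl))
    exact (hfin k).subset fun n ⟨⟨_, hnM⟩, hnk⟩ => ⟨hnk, hnM⟩
  obtain ⟨f, hf0, hf⟩ := exists_seq_of_forall_finset_exists (fun k => (Bk k).Infinite)
    (fun i k => i < k ∧ (Bk k \ Bk i).Infinite) fun s _ => by
      obtain ⟨k, hk⟩ := hgrow (s.sup id)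
      have hlt : s.sup id < k := not_le.1 fun h => hk (by simp [sdiff_eq_empty.2 (hmono h)])
      refine ⟨k, hk.mono sdiff_subset, fun i hi => ?_⟩
      have hi : i ≤ s.sup id := Finset.le_sup (f := id) hi
      exact ⟨hi.trans_lt hlt, hk.mono (sdiff_subset_sdiff_right (hmono hi))⟩
  have hfmono : StrictMono f := strictMono_nat_of_lt_succ fun j => (hf j (j + 1) j.lt_succ_self).1
  have hBkf : Monotone (Bk ∘ f) := hmono.comp hfmono.monotone
  set D := disjointed (Bk ∘ f)
  have hD : ⋃ j, D j = B := by
    refine iUnion_disjointed.trans (subset_antisymm ?_ ?_)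
    · exact hcover ▸ iUnion_mono' fun j => ⟨f j, subset_rfl⟩
    · exact hcover ▸ iUnion_mono fun k => hmono (hfmono.id_le k)
  refine hcopy (hD ▸ hI.finFinCopyOn_iUnion D (disjoint_disjointed _) (fun j => ?_)
    (fun j => hI.mem_of_subset (hBkI (f j)) (disjointed_subset _ j)) fun A hA hfin => ?_)
  · cases j with
    | zero => simpa [D] using hf0 0
    | succ j => simpa [D, hBkf.disjointed_add_one] using (hf j (j + 1) j.lt_succ_self).2
  · refine hsmall A (hD ▸ hA) fun k => ?_
    have hk : Bk k ⊆ ⋃ j ∈ Finset.range (k + 1), D j := by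
      rw [← partialSups_eq_biUnion_range, partialSups_disjointed, hBkf.partialSups_eq]
      exact hmono (hfmono.id_le k)
    refine ((Finset.range (k + 1)).finite_toSet.biUnion fun j _ => hfin j).subset
      fun n ⟨hnA, hnk⟩ => ?_
    obtain ⟨j, hj, hnj⟩ := mem_iUnion₂.1 (hk hnk)
    exact mem_iUnion₂.2 ⟨j, hj, hnA, hnj⟩

theorem convAlong_of_forall_eq {X : Type*} [TopologicalSpace X] {A : Set ℕ} {x : ℕ → X}
    {l : X} (h : ∀ n ∈ A, x n = l) : ConvAlong A x l := fun _ hU =>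
  finite_empty.subset fun n ⟨hn, hnU⟩ => hnU (h n hn ▸ mem_of_mem_nhds hU)

theorem convAlong_of_forall_lt {X : Type*} [LinearOrder X] [TopologicalSpace X] [OrderTopology X]
    {A : Set ℕ} {x : ℕ → X} {l : X} (hlt : ∀ n ∈ A, x n < l)
    (hfin : ∀ a < l, {n ∈ A | x n ≤ a}.Finite) : ConvAlong A x l := by
  intro U hU
  rcases (Iio l).eq_empty_or_nonempty with hempty | hne
  · exact finite_empty.subset fun n hn => hempty.subset (hlt n hn.1)
  · obtain ⟨a, hal, hIoc⟩ := exists_Ioc_subset_of_mem_nhds hU hne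
    exact (hfin a hal).subset fun n ⟨hnA, hnU⟩ =>
      ⟨hnA, not_lt.1 fun h => hnU (hIoc ⟨h, (hlt n hnA).le⟩)⟩

section WellOrder

variable {X : Type*} [LinearOrder X] [WellFoundedLT X]

theorem IsIdeal.exists_least_setOf_le_notMem {I : Set (Set ℕ)} (hI : IsIdeal I) {x : ℕ → X}
    (hx : BddAbove (range x)) :
    ∃ l, {n | x n ≤ l} ∉ I ∧ ∀ a < l, {n | x n ≤ a} ∈ I := by
  obtain ⟨u, hu⟩ := hx
  have hu' : {n | x n ≤ u} ∉ I := by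
    have huniv : {n | x n ≤ u} = univ := eq_univ_of_forall fun n => hu (mem_range_self n)
    exact huniv ▸ hI.2.2.2
  obtain ⟨l, hl, hmin⟩ := wellFounded_lt.has_min {a | {n | x n ≤ a} ∉ I} ⟨u, hu'⟩
  exact ⟨l, hl, fun a ha => not_not.1 fun h => hmin a h ha⟩

theorem finBW_of_countable_Iio [TopologicalSpace X] [OrderTopology X]
    (hbdd : ∀ x : ℕ → X, BddAbove (range x)) (hcount : ∀ l : X, (Iio l).Countable)
    {I : Set (Set ℕ)} (hI : IsIdeal I) (hcopy : ∀ B, B ∉ I → ¬ FinFinCopyOn I B) :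
    FinBW I X := by
  intro x
  obtain ⟨l, hl, hmin⟩ := hI.exists_least_setOf_le_notMem (hbdd x)
  by_cases hE : {n | x n = l} ∉ I
  · exact ⟨_, hE, l, convAlong_of_forall_eq fun _ hn => hn⟩
  rw [not_not] at hE
  set B := {n | x n < l}
  have hB : B ∉ I := fun hB => hl (hI.mem_of_subset_union hB hE fun n hn => le_iff_lt_or_eq.1 hn)
  obtain ⟨β, hβ⟩ := (hcount l).exists_eq_range
    (let ⟨n, hn⟩ := hI.nonempty_of_notMem hB; ⟨x n, hn⟩)
  have hβl : ∀ k, partialSups β k < l := fun k => by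
    obtain ⟨j, -, hj⟩ := exists_partialSups_eq β k
    exact hj ▸ hβ.ge (mem_range_self j)
  set Bk : ℕ → Set ℕ := fun k => {n | x n ≤ partialSups β k}
  have hcover : ⋃ k, Bk k = B := by
    ext n
    refine ⟨fun hn => ?_, fun hn => ?_⟩
    · obtain ⟨k, hk⟩ := mem_iUnion.1 hn
      exact lt_of_le_of_lt hk (hβl k)
    · obtain ⟨j, hj⟩ := hβ.le hn
      exact mem_iUnion.2 ⟨j, hj.ge.trans (le_partialSups β j)⟩
  have hmono : Monotone Bk := fun i j hij n hn => le_trans hn ((partialSups β).monotone hij)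
  obtain ⟨A, hAB, hA, hAfin⟩ := hI.exists_notMem_forall_inter_finite hB (hcopy B hB) hmono
    (fun k => hmin _ (hβl k)) hcover
  refine ⟨A, hA, l, convAlong_of_forall_lt (fun n hn => hAB hn) fun a ha => ?_⟩
  obtain ⟨j, rfl⟩ := hβ.le ha
  exact (hAfin j).subset fun n ⟨hnA, hn⟩ => ⟨hnA, hn.trans (le_partialSups β j)⟩

end WellOrder

instance : WellFoundedLT Omega1 :=
  inferInstanceAs (WellFoundedLT {o : Ordinal // o < (Cardinal.aleph 1).ord})

theorem Omega1.bddAbove_range (x : ℕ → Omega1) : BddAbove (range x) := by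
  have hsup : ⨆ n, (x n).1 < (Cardinal.aleph 1).ord := by
    refine Ordinal.iSup_lt_of_lt_cof ?_ fun n => (x n).2
    rw [Cardinal.isRegular_aleph_one.cof_ord, Cardinal.mk_nat]
    exact Cardinal.aleph0_lt_aleph_one
  exact ⟨⟨_, hsup⟩, forall_mem_range.2 fun n => Ordinal.le_iSup (fun n => (x n).1) n⟩

theorem Omega1.countable_Iio (l : Omega1) : (Iio l).Countable := by
  have hl : (Iio l.1).Countable := by
    rw [← Cardinal.le_aleph0_iff_set_countable, Cardinal.mk_Iio_ordinal, Cardinal.lift_le_aleph0,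
      ← Order.lt_succ_iff, Cardinal.succ_aleph0, ← Cardinal.lt_ord]
    exact l.2
  exact hl.preimage Subtype.val_injective

theorem stmt_16 (I : Set (Set ℕ)) (hI : IsIdeal I)
    (h : ∀ B : Set ℕ, B ∉ I → ¬ FinFinCopyOn I B) :
    ∀ g : ℕ → Omega1, ∃ A : Set ℕ, A ∉ I ∧ ∃ l : Omega1, ConvAlong A g l :=
  finBW_of_countable_Iio Omega1.bddAbove_range Omega1.countable_Iio hI h
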